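/- arXiv:2602.02291 — 2 statements merged into one kernel-verified Lean document; each statement's English description precedes it below -/
import Mathlib

section
/- For any α ∈ (0,1], the set of α-RNEs satisfies N_α = (N_1 \ M_α) ∪ P_α, where N_1 is the set of classical mean-field Nash equilibria, M_α := { μ : μ_i < 1-α for all i ∈ A } and P_α := { μ : μ_{i} = 1-α for i = A^H(μ), and (supp(μ) \ {i}) ⊆ argmax_{j∈A} u(j,μ) }. -/
open Finset

/-- A probability vector on the finite action set `Fin n`. -/
def IsProb {n : ℕ} (μ : Fin n → ℝ) : Prop := (∀ i, 0 ≤ μ i) ∧ ∑ i, μ i = 1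

/-- The herding choice `A^H(μ)`: the smallest index among the maximizers of `μ`. -/
noncomputable def herd {n : ℕ} [NeZero n] (μ : Fin n → ℝ) : Fin n := by
  classical
  exact (Finset.univ.filter (fun i => ∀ j, μ j ≤ μ i)).min' (by
    obtain ⟨b, _, hb⟩ := Finset.exists_max_image (Finset.univ : Finset (Fin n)) μ Finset.univ_nonempty
    exact ⟨b, by
      simp only [Finset.mem_filter, Finset.mem_univ, true_and]
      exact fun j => hb j (Finset.mem_univ j)⟩)

lemma herd_max {n : ℕ} [NeZero n] (μ : Fin n → ℝ) (j : Fin n) : μ j ≤ μ (herd μ) := by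
  classical
  have h : herd μ ∈ Finset.univ.filter (fun i => ∀ j, μ j ≤ μ i) := by
    unfold herd
    exact Finset.min'_mem _ _
  exact (Finset.mem_filter.mp h).2 j

/-- `(μ, μR)` is an `α`-Rational Nash Equilibrium for the utility `u`. -/
def IsRNE {n : ℕ} [NeZero n] (u : Fin n → (Fin n → ℝ) → ℝ) (α : ℝ)
    (μ μR : Fin n → ℝ) : Prop :=
  IsProb μ ∧ IsProb μR ∧
  (∀ i, 0 < μR i → ∀ j, u j μ ≤ u i μ) ∧
  (∀ i, μ i = α * μR i + if i = herd μ then 1 - α else 0)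

/-- `μ` is a classical mean-field Nash equilibrium. -/
def IsNE1 {n : ℕ} (u : Fin n → (Fin n → ℝ) → ℝ) (μ : Fin n → ℝ) : Prop :=
  IsProb μ ∧ ∀ i, 0 < μ i → ∀ j, u j μ ≤ u i μ

/-- `N_α = (N_1 \ M_α) ∪ P_α`. -/
theorem rne_characterization {n : ℕ} [NeZero n] (u : Fin n → (Fin n → ℝ) → ℝ)
    (α : ℝ) (hα0 : 0 < α) (hα1 : α ≤ 1) (μ : Fin n → ℝ) (hμ : IsProb μ) :
    (∃ μR, IsRNE u α μ μR) ↔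
      ((IsNE1 u μ ∧ ¬ (∀ i, μ i < 1 - α)) ∨
       (μ (herd μ) = 1 - α ∧
        ∀ i, 0 < μ i → i ≠ herd μ → ∀ j, u j μ ≤ u i μ)) := by
  classical
  constructor
  · rintro ⟨μR, hP, hPR, hopt, heq⟩
    have hRpos : ∀ i, i ≠ herd μ → 0 < μ i → 0 < μR i := by
      intro i hne hi
      have h1 := heq i
      rw [if_neg hne, add_zero] at h1
      rcases lt_or_eq_of_le (hPR.1 i) with hp | hp
      · exact hp
      · exfalso; rw [← hp, mul_zero] at h1; linarith
    by_cases hc : μR (herd μ) = 0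
    · right
      constructor
      · rw [heq (herd μ), if_pos rfl, hc, mul_zero, zero_add]
      · intro i hi hne j
        exact hopt i (hRpos i hne hi) j
    · left
      have hμh : 1 - α ≤ μ (herd μ) := by
        have h1 := heq (herd μ)
        rw [if_pos rfl] at h1
        nlinarith [hPR.1 (herd μ)]
      refine ⟨⟨hμ, ?_⟩, ?_⟩
      · intro i hi j
        by_cases hih : i = herd μ
        · subst hih
          exact hopt _ (lt_of_le_of_ne (hPR.1 _) (Ne.symm hc)) j
        · exact hopt i (hRpos i hih hi) j
      · push_neg
        exact ⟨herd μ, hμh⟩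
  · intro hcase
    refine ⟨fun i => (μ i - if i = herd μ then 1 - α else 0) / α, hμ, ⟨?_, ?_⟩, ?_, ?_⟩
    · -- nonnegativity
      intro i
      apply div_nonneg _ hα0.le
      by_cases hih : i = herd μ
      · rw [if_pos hih]
        rcases hcase with ⟨_, hM⟩ | ⟨hPh, _⟩
        · push_neg at hM
          obtain ⟨k, hk⟩ := hM
          subst hih
          linarith [herd_max μ k]
        · subst hih; linarith
      · rw [if_neg hih, sub_zero]
        exact hμ.1 i
    · -- sum = 1
      rw [← Finset.sum_div, Finset.sum_sub_distrib, hμ.2,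
        Finset.sum_ite_eq' Finset.univ (herd μ) (fun _ => 1 - α),
        if_pos (Finset.mem_univ _)]
      field_simp
      ring
    · -- optimality on support
      intro i hi j
      have hpos : 0 < μ i - if i = herd μ then 1 - α else 0 := by
        have h2 := mul_pos hα0 hi
        rwa [mul_div_cancel₀ _ (ne_of_gt hα0)] at h2
      rcases hcase with ⟨⟨_, hNE⟩, _⟩ | ⟨hPh, hPopt⟩
      · refine hNE i ?_ j
        by_cases hih : i = herd μ
        · rw [if_pos hih] at hpos; linarith
        · rw [if_neg hih, sub_zero] at hpos; exact hpos
      · by_cases hih : i = herd μ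
        · exfalso; rw [if_pos hih, hih] at hpos; linarith
        · rw [if_neg hih, sub_zero] at hpos
          exact hPopt i hpos hih j
    · intro i
      field_simp
      ring
end

section
/- In the three-route congestion game, the social optimal utility is u^s_* = -2ρ if ρ ≤ 1/2, and u^s_* = (1-4ρ)/(2ρ) if ρ > 1/2. -/
open Finset

/-- Utility of the three-route congestion game (actions `0 = A`, `1 = B`,
`2 = AB`). -/
def uThree (ρ : ℝ) : Fin 3 → (Fin 3 → ℝ) → ℝ := fun i ν =>
  if i = 0 then -1 - ρ * (ν 0 + ν 2)
  else if i = 1 then -1 - ρ * (ν 1 + ν 2)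
  else -(ρ * (ν 0 + ν 2)) - ρ * (ν 1 + ν 2)

/-- Social utility of the three-route congestion game. -/
def usThree (ρ : ℝ) (μ : Fin 3 → ℝ) : ℝ := ∑ i, μ i * uThree ρ i μ

/-- the social optimal utility of the three-route game is `-2ρ`
if `ρ ≤ 1/2` and `(1-4ρ)/(2ρ)` if `ρ > 1/2`. -/
theorem social_optimum_three_route (ρ : ℝ) (hρ0 : 0 < ρ) (hρ1 : ρ < 1) :
    sSup {x : ℝ | ∃ μ, IsProb μ ∧ x = usThree ρ μ} =
      if ρ ≤ 1 / 2 then -(2 * ρ) else (1 - 4 * ρ) / (2 * ρ) := by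
  have hinv : ρ * ρ⁻¹ = 1 := mul_inv_cancel₀ hρ0.ne'
  have hinvpos : 0 < ρ⁻¹ := inv_pos.mpr hρ0
  have d10 : (1:Fin 3) ≠ 0 := by decide
  have d20 : (2:Fin 3) ≠ 0 := by decide
  have d21 : (2:Fin 3) ≠ 1 := by decide
  apply IsGreatest.csSup_eq
  constructor
  · by_cases h : ρ ≤ 1 / 2
    · simp only [if_pos h]
      refine ⟨![0, 0, 1], ⟨fun i => by fin_cases i <;> norm_num,
        by simp [Fin.sum_univ_three]⟩, ?_⟩
      simp only [usThree, uThree, Fin.sum_univ_three]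
      norm_num [d10, d20, d21, Matrix.cons_val_two, Matrix.vecHead, Matrix.vecTail]
      ring
    · simp only [if_neg h]
      push_neg at h
      refine ⟨![1 - 1 / (2 * ρ), 1 - 1 / (2 * ρ), 1 / ρ - 1], ⟨fun i => by
        fin_cases i <;> simp <;> nlinarith [hinv, hinvpos], ?_⟩, ?_⟩
      · simp [Fin.sum_univ_three]
        field_simp
        ring
      · simp only [usThree, uThree, Fin.sum_univ_three]
        norm_num [d10, d20, d21, Matrix.cons_val_two, Matrix.vecHead, Matrix.vecTail]
        field_simp
        ring
  · rintro x ⟨μ, ⟨hpos, hsum⟩, rfl⟩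
    have h0 := hpos 0
    have h1 := hpos 1
    have h2 := hpos 2
    have hsum' : μ 0 + μ 1 + μ 2 = 1 := by
      simpa [Fin.sum_univ_three] using hsum
    have e : usThree ρ μ
        = -(μ 0) - μ 1 - ρ * (1 - μ 1)^2 - ρ * (1 - μ 0)^2 := by
      simp only [usThree, uThree, Fin.sum_univ_three]
      norm_num [d10, d20, d21]
      linear_combination (-(2 * ρ) * (1 + μ 2)) * hsum'
    rw [e]
    split_ifs with h
    · nlinarith [mul_nonneg h0 (sub_nonneg.mpr (by nlinarith : ρ * (2 - μ 0) ≤ 1)),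
        mul_nonneg h1 (sub_nonneg.mpr (by nlinarith : ρ * (2 - μ 1) ≤ 1))]
    · push_neg at h
      rw [le_div_iff₀ (by positivity : (0:ℝ) < 2 * ρ)]
      nlinarith [sq_nonneg (2 * ρ * (1 - μ 0) - 1), sq_nonneg (2 * ρ * (1 - μ 1) - 1)]
end
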